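/- arXiv:2502.03316 — 3 statements merged into one kernel-verified Lean document; each statement's English description precedes it below -/
import Mathlib

section
/- Let W be the subgroup of GL(F̂) generated by the reflections s_{α_0}, s_{α_1}, …, s_{α_l}. Then the set of real roots Δ^{re} = W·{α_0,…,α_l} equals the disjoint union Δ_s ∪ Δ_m ∪ Δ_l, where Δ_s = {±ε_i + rδ : 1 ≤ i ≤ l, r ∈ ℤ}, Δ_m = {±ε_i ± ε_j + rδ : 1 ≤ i < j ≤ l, r ∈ ℤ}, and Δ_l = {±2ε_i + (2r+1)δ : 1 ≤ i ≤ l, r ∈ ℤ}. -/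
/-!
Write vectors of the lattice `⊕ ℤεᵢ ⊕ ℤδ` as `∑ yᵢ εᵢ + d δ`. On them the simple reflections act
by: `s_{α_i}` (`1 ≤ i < l`) swaps `y_i` and `y_{i+1}`, `s_{α_l}` negates `y_l`, and `s_{α_0}`
negates `y_1` and adds `y_1` to `d`. Hence `W` preserves `∑ yᵢ²`, the evenness of all `yᵢ`, and
then also the parity of `d`: every real root has `∑ yᵢ² = 1`, or `= 2`, or `= 4` with all `yᵢ`
even and `d` odd, and these three conditions describe exactly `Δ_s`, `Δ_m`, `Δ_l` (which are
disjoint since `Î(v, v)` is `1`, `2`, `4` on them). Conversely, adjacent transpositions generate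
all permutations of the coordinates, conjugating `s_{α_l}` by them gives every sign change, and
`s_{α_0}` composed with the sign change of `y_1` is the translation `d ↦ d - y_1`. Starting from
`α_l`, `α_1` and `α_0` these operations reach all of `Δ_s`, `Δ_m` and `Δ_l`.
-/

open scoped BigOperators
open Finset

noncomputable section

/-- `F̂ = ℝ^l ⊕ ℝδ ⊕ ℝγ`, a vector `(x, d, g)` represents `x + d·δ + g·γ`. -/
abbrev Fhat (l : ℕ) := (Fin l → ℝ) × ℝ × ℝ

/-- The bilinear form `Î` on `F̂`. -/
def Ihat {l : ℕ} (u v : Fhat l) : ℝ :=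
  (∑ i, u.1 i * v.1 i) + u.2.1 * v.2.2 + u.2.2 * v.2.1

/-- The isotropic vector `δ`. -/
def deltaV (l : ℕ) : Fhat l := (0, 1, 0)

/-- The isotropic vector `γ`. -/
def gammaV (l : ℕ) : Fhat l := (0, 0, 1)

/-- The standard basis vector `ε_n` (1-based index `n`, for `1 ≤ n ≤ l`). -/
def eps (l : ℕ) (n : ℕ) : Fhat l := (fun j => if (j : ℕ) = n - 1 then 1 else 0, 0, 0)

/-- The translation `t_μ` associated to `μ ∈ F`. -/
def tmu {l : ℕ} (μ u : Fhat l) : Fhat l :=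
  u + Ihat u (deltaV l) • μ
    - (Ihat u μ + (1/2) * Ihat μ μ * Ihat u (deltaV l)) • deltaV l

/-- The reflection `s_β` for a non-isotropic `β`. -/
def sref {l : ℕ} (β u : Fhat l) : Fhat l := u - (2 * Ihat u β / Ihat β β) • β

/-- The simple roots `α_0 = δ − 2ε_1`, `α_i = ε_i − ε_{i+1}` (`1 ≤ i ≤ l−1`),
`α_l = ε_l` of type `BC_l^{(2)}`. -/
def simpleRoot (l : ℕ) (i : ℕ) : Fhat l :=
  if i = 0 then deltaV l - (2 : ℝ) • eps l 1
  else if i = l then eps l l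
  else eps l i - eps l (i + 1)

/-- The orbit `Δ^{re} = W·Π` of the simple roots under the group `W` generated by
the simple reflections (which are involutions, so the orbit is the closure of `Π`
under the generating reflections). -/
inductive IsRealRoot (l : ℕ) : Fhat l → Prop
  | simple (i : ℕ) (hi : i ≤ l) : IsRealRoot l (simpleRoot l i)
  | refl (i : ℕ) (hi : i ≤ l) (v : Fhat l) :
      IsRealRoot l v → IsRealRoot l (sref (simpleRoot l i) v)

/-- `Δ_s = {±ε_i + rδ : 1 ≤ i ≤ l, r ∈ ℤ}`. -/
def DeltaS (l : ℕ) : Set (Fhat l) :=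
  {v | ∃ i : ℕ, 1 ≤ i ∧ i ≤ l ∧ ∃ (r : ℤ) (s : ℤˣ),
    v = ((s : ℤ) : ℝ) • eps l i + ((r : ℤ) : ℝ) • deltaV l}

/-- `Δ_m = {±ε_i ± ε_j + rδ : 1 ≤ i < j ≤ l, r ∈ ℤ}`. -/
def DeltaM (l : ℕ) : Set (Fhat l) :=
  {v | ∃ i j : ℕ, 1 ≤ i ∧ i < j ∧ j ≤ l ∧ ∃ (r : ℤ) (s s' : ℤˣ),
    v = ((s : ℤ) : ℝ) • eps l i + ((s' : ℤ) : ℝ) • eps l j + ((r : ℤ) : ℝ) • deltaV l}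

/-- `Δ_l = {±2ε_i + (2r+1)δ : 1 ≤ i ≤ l, r ∈ ℤ}`. -/
def DeltaL (l : ℕ) : Set (Fhat l) :=
  {v | ∃ i : ℕ, 1 ≤ i ∧ i ≤ l ∧ ∃ (r : ℤ) (s : ℤˣ),
    v = ((2 * s : ℤ) : ℝ) • eps l i + ((2 * r + 1 : ℤ) : ℝ) • deltaV l}

lemma Pi.update_single_same {ι R : Type*} [DecidableEq ι] [Zero R] (p : ι) (a b : R) :
    Function.update (Pi.single p a : ι → R) p b = Pi.single p b :=
  Function.update_idem ..

lemma Pi.single_add_update_zero {ι R : Type*} [DecidableEq ι] [AddCommGroup R] (y : ι → R)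
    (p : ι) : Pi.single p (y p) + Function.update y p 0 = y := by
  rw [Pi.update_eq_sub_add_single, Pi.single_zero, add_zero, add_sub_cancel]

section DotProduct

variable {ι R : Type*} [Fintype ι]

lemma dotProduct_self_nonneg [Ring R] [LinearOrder R] [IsStrictOrderedRing R] (y : ι → R) :
    0 ≤ y ⬝ᵥ y :=
  Fintype.sum_nonneg fun i => mul_self_nonneg (y i)

lemma exists_ne_zero_of_dotProduct_self_ne_zero [NonUnitalNonAssocSemiring R] {y : ι → R}
    (h : y ⬝ᵥ y ≠ 0) : ∃ p, y p ≠ 0 := by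
  by_contra! hy
  exact h (by simp [show y = 0 from funext hy])

variable [DecidableEq ι]

lemma dotProduct_self_eq_mul_self_add [CommRing R] (y : ι → R) (p : ι) :
    y ⬝ᵥ y = y p * y p + Function.update y p 0 ⬝ᵥ Function.update y p 0 := by
  conv_lhs => rw [← Pi.single_add_update_zero y p]
  simp [add_dotProduct, dotProduct_add]

lemma dotProduct_self_update_neg [CommRing R] (y : ι → R) (p : ι) :
    Function.update y p (-y p) ⬝ᵥ Function.update y p (-y p) = y ⬝ᵥ y := by
  rw [dotProduct_self_eq_mul_self_add _ p, dotProduct_self_eq_mul_self_add y p]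
  simp

theorem eq_single_of_dotProduct_self_eq_one {y : ι → ℤ} (h : y ⬝ᵥ y = 1) :
    ∃ p, (y p = 1 ∨ y p = -1) ∧ y = Pi.single p (y p) := by
  obtain ⟨p, hp⟩ := exists_ne_zero_of_dotProduct_self_ne_zero (h ▸ one_ne_zero)
  have hsplit := dotProduct_self_eq_mul_self_add y p
  have hpos : 0 < y p * y p := mul_self_pos.mpr hp
  have hrest := dotProduct_self_nonneg (Function.update y p 0)
  have hrest0 : Function.update y p 0 = 0 := dotProduct_self_eq_zero.mp (by omega)
  refine ⟨p, mul_self_eq_one_iff.mp (by omega), ?_⟩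
  rw [← Pi.single_add_update_zero y p, hrest0, add_zero, Pi.single_eq_same]

theorem eq_single_add_single_of_dotProduct_self_eq_two {y : ι → ℤ} (h : y ⬝ᵥ y = 2) :
    ∃ p q, p ≠ q ∧ (y p = 1 ∨ y p = -1) ∧ (y q = 1 ∨ y q = -1) ∧
      y = Pi.single p (y p) + Pi.single q (y q) := by
  obtain ⟨p, hp⟩ := exists_ne_zero_of_dotProduct_self_ne_zero (h ▸ two_ne_zero)
  have hsplit := dotProduct_self_eq_mul_self_add y p
  have hpos : 0 < y p * y p := mul_self_pos.mpr hp
  have hrest := dotProduct_self_nonneg (Function.update y p 0)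
  have hp1 : y p * y p = 1 := by have := Int.sq_ne_two_mod_four (y p); omega
  obtain ⟨q, hq, hyq⟩ :=
    eq_single_of_dotProduct_self_eq_one (y := Function.update y p 0) (by omega)
  have hqp : q ≠ p := by rintro rfl; simp at hq
  rw [Function.update_of_ne hqp] at hq hyq
  exact ⟨p, q, hqp.symm, mul_self_eq_one_iff.mp hp1, hq, by
    rw [← hyq, Pi.single_add_update_zero]⟩

theorem eq_single_of_dotProduct_self_eq_four {y : ι → ℤ} (h : y ⬝ᵥ y = 4)
    (heven : ∀ j, Even (y j)) : ∃ p, (y p = 2 ∨ y p = -2) ∧ y = Pi.single p (y p) := by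
  choose z hz using heven
  have hyz : y = (2 : ℤ) • z := funext fun j => by simp [hz j, two_mul]
  rw [hyz, smul_dotProduct, dotProduct_smul, smul_eq_mul, smul_eq_mul] at h
  obtain ⟨p, hp, hzp⟩ := eq_single_of_dotProduct_self_eq_one (y := z) (by omega)
  refine ⟨p, by simp only [hyz, Pi.smul_apply, smul_eq_mul]; omega, ?_⟩
  rw [hyz, hzp]
  ext j
  simp [Pi.single_apply]

end DotProduct

section Lattice

variable {l : ℕ}

/-- `∑ⱼ y j • ε_{j+1} + d • δ`: coordinates are indexed from `0`, whereas `eps` counts from `1`. -/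
def intVec (y : Fin l → ℤ) (d : ℤ) : Fhat l := (fun j => y j, d, 0)

lemma Ihat_intVec (y z : Fin l → ℤ) (d e : ℤ) :
    Ihat (intVec y d) (intVec z e) = ((y ⬝ᵥ z : ℤ) : ℝ) := by
  simp [Ihat, intVec, dotProduct]

lemma eps_eq_intVec {i : ℕ} (p : Fin l) (hp : (p : ℕ) + 1 = i) :
    eps l i = intVec (Pi.single p 1) 0 := by
  subst hp
  ext j
  · simp [eps, intVec, Pi.single_apply, Fin.ext_iff]
  · simp [eps, intVec]
  · simp [eps, intVec]

lemma deltaV_eq_intVec : deltaV l = intVec 0 1 := by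
  ext <;> simp [deltaV, intVec]

lemma intVec_add (y z : Fin l → ℤ) (d e : ℤ) :
    intVec y d + intVec z e = intVec (y + z) (d + e) := by
  ext <;> simp [intVec]

lemma intCast_smul_intVec (c : ℤ) (y : Fin l → ℤ) (d : ℤ) :
    (c : ℝ) • intVec y d = intVec (c • y) (c * d) := by
  ext <;> simp [intVec]

lemma intVec_sub (y z : Fin l → ℤ) (d e : ℤ) :
    intVec y d - intVec z e = intVec (y - z) (d - e) := by
  ext <;> simp [intVec]

lemma sref_intVec {y z : Fin l → ℤ} {d e c : ℤ} (hz : z ⬝ᵥ z ≠ 0)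
    (hc : 2 * (y ⬝ᵥ z) = c * (z ⬝ᵥ z)) :
    sref (intVec z e) (intVec y d) = intVec (y - c • z) (d - c * e) := by
  have hcoeff : 2 * ((y ⬝ᵥ z : ℤ) : ℝ) / ((z ⬝ᵥ z : ℤ) : ℝ) = c := by
    rw [div_eq_iff (by exact_mod_cast hz)]
    exact_mod_cast hc
  rw [sref, Ihat_intVec, Ihat_intVec, hcoeff, intCast_smul_intVec, intVec_sub]

end Lattice

section SimpleReflections

variable {n : ℕ}

open Function

lemma simpleRoot_zero : simpleRoot (n + 1) 0 = intVec (Pi.single 0 (-2)) 1 := by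
  rw [simpleRoot, if_pos rfl, deltaV_eq_intVec, eps_eq_intVec (i := 1) 0 rfl,
    show (2 : ℝ) = ((2 : ℤ) : ℝ) by norm_num, intCast_smul_intVec, intVec_sub]
  congr 1
  ext j
  simp [Pi.single_apply, apply_ite Neg.neg]

lemma simpleRoot_last : simpleRoot (n + 1) (n + 1) = intVec (Pi.single (Fin.last n) 1) 0 := by
  rw [simpleRoot, if_neg (by omega), if_pos rfl, eps_eq_intVec (i := n + 1) (Fin.last n) rfl]

lemma simpleRoot_succ (k : Fin n) :
    simpleRoot (n + 1) (k + 1) = intVec (Pi.single k.castSucc 1 - Pi.single k.succ 1) 0 := by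
  rw [simpleRoot, if_neg (by omega), if_neg (by omega),
    eps_eq_intVec (i := k + 1) k.castSucc rfl,
    eps_eq_intVec (i := k + 1 + 1) k.succ rfl,
    intVec_sub, sub_zero]

lemma sref_simpleRoot_zero (y : Fin (n + 1) → ℤ) (d : ℤ) :
    sref (simpleRoot (n + 1) 0) (intVec y d) = intVec (update y 0 (-y 0)) (d + y 0) := by
  rw [simpleRoot_zero, sref_intVec (c := -y 0) (by simp) (by simp [dotProduct_single]; ring)]
  congr 1
  · ext j; rcases eq_or_ne j 0 with rfl | hj <;> simp [*]; ring
  · ring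

lemma sref_simpleRoot_last (y : Fin (n + 1) → ℤ) (d : ℤ) :
    sref (simpleRoot (n + 1) (n + 1)) (intVec y d) =
      intVec (update y (Fin.last n) (-y (Fin.last n))) d := by
  rw [simpleRoot_last,
    sref_intVec (c := 2 * y (Fin.last n)) (by simp) (by simp [dotProduct_single])]
  congr 1
  · ext j; rcases eq_or_ne j (Fin.last n) with rfl | hj <;> simp [*]; ring
  · ring

lemma sref_simpleRoot_succ (k : Fin n) (y : Fin (n + 1) → ℤ) (d : ℤ) :
    sref (simpleRoot (n + 1) (k + 1)) (intVec y d) =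
      intVec (y ∘ Equiv.swap k.castSucc k.succ) d := by
  have hne : k.castSucc ≠ k.succ := Fin.castSucc_lt_succ.ne
  rw [simpleRoot_succ, sref_intVec (c := y k.castSucc - y k.succ)
    (by simp [dotProduct_sub, dotProduct_single, hne, hne.symm])
    (by simp [dotProduct_sub, dotProduct_single, hne, hne.symm]; ring)]
  congr 1
  · ext j
    rcases eq_or_ne j k.castSucc with rfl | h1
    · simp [hne]
    rcases eq_or_ne j k.succ with rfl | h2
    · simp [hne]
    simp [Equiv.swap_apply_of_ne_of_ne h1 h2, h1, h2]
  · ring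

end SimpleReflections

section Invariant

variable {l : ℕ}

def IsRootCoords (y : Fin l → ℤ) (d : ℤ) : Prop :=
  y ⬝ᵥ y = 1 ∨ y ⬝ᵥ y = 2 ∨ (y ⬝ᵥ y = 4 ∧ (∀ j, Even (y j)) ∧ Odd d)

open Function

namespace IsRootCoords

variable {y : Fin l → ℤ} {d : ℤ}

lemma comp_perm (σ : Equiv.Perm (Fin l)) (h : IsRootCoords y d) : IsRootCoords (y ∘ σ) d := by
  unfold IsRootCoords at h ⊢
  rw [comp_equiv_dotProduct_comp_equiv]
  exact h.imp_right (Or.imp_right fun ⟨h, heven, hd⟩ => ⟨h, fun j => heven (σ j), hd⟩)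

lemma update_neg (p : Fin l) (k : ℤ) (h : IsRootCoords y d) :
    IsRootCoords (update y p (-y p)) (d + k * y p) := by
  unfold IsRootCoords at h ⊢
  rw [dotProduct_self_update_neg]
  rcases h with h | h | ⟨h, heven, hd⟩
  · exact .inl h
  · exact .inr (.inl h)
  · refine .inr (.inr ⟨h, fun j => ?_, hd.add_even ((heven p).mul_left k)⟩)
    rcases eq_or_ne j p with rfl | hj
    · simpa using heven j
    · simpa [hj] using heven j

end IsRootCoords

end Invariant

section Orbit

variable {n : ℕ} {y : Fin (n + 1) → ℤ} {d : ℤ}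

open Function Equiv

theorem IsRealRoot.comp_perm (σ : Perm (Fin (n + 1))) (h : IsRealRoot (n + 1) (intVec y d)) :
    IsRealRoot (n + 1) (intVec (y ∘ σ) d) := by
  have hσ : σ ∈ Submonoid.closure (Set.range fun k : Fin n ↦ swap k.castSucc k.succ) := by
    rw [Perm.mclosure_swap_castSucc_succ]; trivial
  induction hσ using Submonoid.closure_induction generalizing y with
  | mem _ hτ =>
    obtain ⟨k, rfl⟩ := hτ
    rw [← sref_simpleRoot_succ]
    exact .refl _ (by omega) _ h
  | one => simpa using h
  | mul τ υ _ _ hτ hυ => simpa [Perm.coe_mul, comp_assoc] using hυ (hτ h)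

theorem IsRealRoot.update_neg (p : Fin (n + 1)) (h : IsRealRoot (n + 1) (intVec y d)) :
    IsRealRoot (n + 1) (intVec (update y p (-y p)) d) := by
  have h' := IsRealRoot.refl (n + 1) le_rfl _ (h.comp_perm (swap p (Fin.last n)))
  rw [sref_simpleRoot_last] at h'
  simpa [update_comp_equiv, comp_assoc, ← Perm.coe_mul] using h'.comp_perm (swap p (Fin.last n))

theorem IsRealRoot.update_of_eq_or_eq_neg (p : Fin (n + 1)) {x : ℤ} (hx : x = y p ∨ x = -y p)
    (h : IsRealRoot (n + 1) (intVec y d)) : IsRealRoot (n + 1) (intVec (update y p x) d) := by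
  rcases hx with rfl | rfl
  · simpa using h
  · exact h.update_neg p

theorem IsRealRoot.add_mul_apply (p : Fin (n + 1)) (k : ℤ) (h : IsRealRoot (n + 1) (intVec y d)) :
    IsRealRoot (n + 1) (intVec y (d + k * y p)) := by
  suffices h₀ : ∀ {y d} (k : ℤ), IsRealRoot (n + 1) (intVec y d) →
      IsRealRoot (n + 1) (intVec y (d + k * y 0)) by
    simpa [comp_assoc, ← Perm.coe_mul] using (h₀ k (h.comp_perm (swap 0 p))).comp_perm (swap 0 p)
  intro y d k h
  induction k using Int.induction_on generalizing d with
  | zero => simpa using h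
  | succ k ih =>
    have h' := IsRealRoot.refl 0 (Nat.zero_le _) _ (ih h)
    rw [sref_simpleRoot_zero] at h'
    simpa [add_mul, add_assoc] using h'.update_neg 0
  | pred k ih =>
    have h' := IsRealRoot.refl 0 (Nat.zero_le _) _ ((ih h).update_neg 0)
    rw [sref_simpleRoot_zero] at h'
    rw [show d + (-(k : ℤ) - 1) * y 0 = d + -k * y 0 + -y 0 by ring]
    simpa using h'

end Orbit

section Generation

variable {n : ℕ} {y : Fin (n + 1) → ℤ}

open Function Equiv

theorem IsRealRoot.of_dotProduct_self_eq_one (hy : y ⬝ᵥ y = 1) (d : ℤ) :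
    IsRealRoot (n + 1) (intVec y d) := by
  obtain ⟨p, hp, hy⟩ := eq_single_of_dotProduct_self_eq_one hy
  have hlast : IsRealRoot (n + 1) (intVec (Pi.single (Fin.last n) 1) 0) :=
    simpleRoot_last (n := n) ▸ .simple _ le_rfl
  have h := ((hlast.comp_perm (swap p (Fin.last n))).add_mul_apply p d).update_of_eq_or_eq_neg p
    (x := y p) (by simpa [Pi.single_comp_equiv] using hp)
  simpa [Pi.single_comp_equiv, Pi.update_single_same, ← hy] using h

theorem IsRealRoot.of_dotProduct_self_eq_two (hy : y ⬝ᵥ y = 2) (d : ℤ) :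
    IsRealRoot (n + 1) (intVec y d) := by
  obtain ⟨p, q, hpq, hp, hq, hy⟩ := eq_single_add_single_of_dotProduct_self_eq_two hy
  rw [hy]
  generalize y p = a at hp
  generalize y q = b at hq
  have hn : n ≠ 0 := by rintro rfl; exact hpq (Fin.ext (by omega))
  set k : Fin n := ⟨0, Nat.pos_of_ne_zero hn⟩
  have hk : IsRealRoot (n + 1) (intVec (Pi.single k.castSucc 1 - Pi.single k.succ 1) 0) :=
    simpleRoot_succ k ▸ .simple _ (by omega)
  have hab : k.castSucc ≠ k.succ := Fin.castSucc_lt_succ.ne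
  obtain ⟨σ, hσp, hσq⟩ := MulAction.is_two_pretransitive_iff.mp
    (Perm.isMultiplyPretransitive (Fin (n + 1)) 2) hpq hab
  rw [Perm.smul_def] at hσp hσq
  have hσ : (Pi.single k.castSucc 1 - Pi.single k.succ 1 : Fin (n + 1) → ℤ) ∘ σ =
      Pi.single p 1 - Pi.single q 1 := by
    simp [Pi.sub_comp, Pi.single_comp_equiv, ← hσp, ← hσq]
  have h := ((hk.comp_perm σ).add_mul_apply p d)
  rw [hσ] at h
  have h2 := (h.update_of_eq_or_eq_neg p (x := a) (by simpa [hpq] using hp)).update_of_eq_or_eq_neg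
    q (x := b) (by simpa [update_of_ne hpq.symm, Pi.single_eq_of_ne hpq.symm] using hq.symm)
  convert h2 using 2
  · ext j
    rcases eq_or_ne j p with rfl | hjp
    · simp [hpq]
    rcases eq_or_ne j q with rfl | hjq
    · simp [hpq.symm]
    simp [hjp, hjq]
  · simp [hpq]

theorem IsRealRoot.of_dotProduct_self_eq_four (hy : y ⬝ᵥ y = 4) (heven : ∀ j, Even (y j))
    {d : ℤ} (hd : Odd d) : IsRealRoot (n + 1) (intVec y d) := by
  obtain ⟨p, hp, hy⟩ := eq_single_of_dotProduct_self_eq_four hy heven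
  obtain ⟨m, rfl⟩ := hd
  have hzero : IsRealRoot (n + 1) (intVec (Pi.single 0 (-2)) 1) :=
    simpleRoot_zero (n := n) ▸ .simple _ (Nat.zero_le _)
  have h := ((hzero.comp_perm (swap p 0)).add_mul_apply p (-m)).update_of_eq_or_eq_neg p
    (x := y p) (by simp; omega)
  rw [hy]
  convert h using 2
  · simp [Pi.single_comp_equiv, Pi.update_single_same]
  · simp; ring

end Generation

section RealRoots

variable {n : ℕ}

lemma le_add_one_cases {i : ℕ} (hi : i ≤ n + 1) : i = 0 ∨ i = n + 1 ∨ ∃ k : Fin n, i = k + 1 := by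
  rcases i with _ | k
  · exact .inl rfl
  · rcases (Nat.succ_le_succ_iff.mp hi).eq_or_lt with rfl | hk
    · exact .inr (.inl rfl)
    · exact .inr (.inr ⟨⟨k, hk⟩, rfl⟩)

theorem IsRealRoot.exists_isRootCoords {v : Fhat (n + 1)} (h : IsRealRoot (n + 1) v) :
    ∃ y d, v = intVec y d ∧ IsRootCoords y d := by
  induction h with
  | simple i hi =>
    rcases le_add_one_cases hi with rfl | rfl | ⟨k, rfl⟩
    · refine ⟨_, _, simpleRoot_zero, .inr (.inr ⟨by simp, fun j => ?_, odd_one⟩)⟩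
      rcases eq_or_ne j 0 with rfl | hj <;> simp [*]
    · exact ⟨_, _, simpleRoot_last, .inl (by simp)⟩
    · exact ⟨_, _, simpleRoot_succ k, .inr (.inl (by
        simp [dotProduct_sub, Fin.castSucc_lt_succ.ne, Fin.castSucc_lt_succ.ne']))⟩
  | refl i hi v _ ih =>
    obtain ⟨y, d, rfl, hyd⟩ := ih
    rcases le_add_one_cases hi with rfl | rfl | ⟨k, rfl⟩
    · exact ⟨_, _, sref_simpleRoot_zero y d, by simpa using hyd.update_neg 0 1⟩
    · exact ⟨_, _, sref_simpleRoot_last y d, by simpa using hyd.update_neg (Fin.last n) 0⟩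
    · exact ⟨_, _, sref_simpleRoot_succ k y d, hyd.comp_perm _⟩

theorem isRealRoot_iff {v : Fhat (n + 1)} :
    IsRealRoot (n + 1) v ↔ ∃ y d, v = intVec y d ∧ IsRootCoords y d := by
  refine ⟨IsRealRoot.exists_isRootCoords, ?_⟩
  rintro ⟨y, d, rfl, h | h | ⟨h, heven, hd⟩⟩
  · exact .of_dotProduct_self_eq_one h d
  · exact .of_dotProduct_self_eq_two h d
  · exact .of_dotProduct_self_eq_four h heven hd

end RealRoots

section Classes

variable {l : ℕ} {v : Fhat l}

lemma smul_eps_add_smul_deltaV {i : ℕ} (p : Fin l) (hp : (p : ℕ) + 1 = i) (a r : ℤ) :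
    (a : ℝ) • eps l i + (r : ℝ) • deltaV l = intVec (Pi.single p a) r := by
  subst hp
  ext j <;> simp [eps, deltaV, intVec, Pi.single_apply, Fin.ext_iff]

lemma smul_eps_add_smul_eps_add_smul_deltaV {i j : ℕ} (p q : Fin l) (hp : (p : ℕ) + 1 = i)
    (hq : (q : ℕ) + 1 = j) (a b r : ℤ) :
    (a : ℝ) • eps l i + (b : ℝ) • eps l j + (r : ℝ) • deltaV l =
      intVec (Pi.single p a + Pi.single q b) r := by
  subst hp hq
  ext k <;> simp [eps, deltaV, intVec, Pi.single_apply, Fin.ext_iff]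

lemma exists_fin_succ_eq {i : ℕ} (h1 : 1 ≤ i) (h2 : i ≤ l) : ∃ p : Fin l, (p : ℕ) + 1 = i :=
  ⟨⟨i - 1, by omega⟩, by simp; omega⟩

lemma mem_DeltaS_iff : v ∈ DeltaS l ↔ ∃ y d, v = intVec y d ∧ y ⬝ᵥ y = 1 := by
  constructor
  · rintro ⟨i, hi1, hil, r, s, rfl⟩
    obtain ⟨p, hp⟩ := exists_fin_succ_eq hi1 hil
    exact ⟨_, _, smul_eps_add_smul_deltaV p hp s r, by simp⟩
  · rintro ⟨y, d, rfl, hy⟩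
    obtain ⟨p, hp, hy⟩ := eq_single_of_dotProduct_self_eq_one hy
    obtain ⟨u, hu⟩ := Int.isUnit_iff.mpr hp
    exact ⟨p + 1, by omega, p.isLt, d, u, by rw [smul_eps_add_smul_deltaV p rfl, hu, ← hy]⟩

lemma mem_DeltaM_iff : v ∈ DeltaM l ↔ ∃ y d, v = intVec y d ∧ y ⬝ᵥ y = 2 := by
  constructor
  · rintro ⟨i, j, hi1, hij, hjl, r, s, s', rfl⟩
    obtain ⟨p, hp⟩ := exists_fin_succ_eq hi1 (hij.le.trans hjl)
    obtain ⟨q, hq⟩ := exists_fin_succ_eq (hi1.trans hij.le) hjl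
    have hpq : p ≠ q := by rintro rfl; omega
    refine ⟨_, _, smul_eps_add_smul_eps_add_smul_deltaV p q hp hq s s' r, ?_⟩
    simp [dotProduct_add, hpq, hpq.symm]
  · rintro ⟨y, d, rfl, hy⟩
    obtain ⟨p, q, hpq, hp, hq, hy⟩ := eq_single_add_single_of_dotProduct_self_eq_two hy
    obtain ⟨u, hu⟩ := Int.isUnit_iff.mpr hp
    obtain ⟨u', hu'⟩ := Int.isUnit_iff.mpr hq
    rcases hpq.lt_or_gt with hlt | hlt
    · exact ⟨p + 1, q + 1, by omega, by simpa using hlt, q.isLt, d, u, u',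
        by rw [smul_eps_add_smul_eps_add_smul_deltaV p q rfl rfl, hu, hu', ← hy]⟩
    · exact ⟨q + 1, p + 1, by omega, by simpa using hlt, p.isLt, d, u', u,
        by rw [smul_eps_add_smul_eps_add_smul_deltaV q p rfl rfl, hu, hu', add_comm, ← hy]⟩

lemma mem_DeltaL_iff :
    v ∈ DeltaL l ↔ ∃ y d, v = intVec y d ∧ y ⬝ᵥ y = 4 ∧ (∀ j, Even (y j)) ∧ Odd d := by
  constructor
  · rintro ⟨i, hi1, hil, r, s, rfl⟩
    obtain ⟨p, hp⟩ := exists_fin_succ_eq hi1 hil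
    refine ⟨_, _, smul_eps_add_smul_deltaV p hp _ _, by simp [mul_mul_mul_comm 2 (s : ℤ)],
      fun j => ?_, odd_two_mul_add_one r⟩
    rcases eq_or_ne j p with rfl | hj <;> simp [*]
  · rintro ⟨y, d, rfl, hy, heven, m, rfl⟩
    obtain ⟨p, hp, hy⟩ := eq_single_of_dotProduct_self_eq_four hy heven
    obtain ⟨u, hu⟩ : ∃ u : ℤˣ, 2 * (u : ℤ) = y p := by
      rcases hp with hp | hp
      exacts [⟨1, by simp [hp]⟩, ⟨-1, by simp [hp]⟩]
    exact ⟨p + 1, by omega, p.isLt, m, u, by rw [smul_eps_add_smul_deltaV p rfl, hu, ← hy]⟩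

lemma mem_DeltaS_union_DeltaM_union_DeltaL_iff :
    v ∈ DeltaS l ∪ DeltaM l ∪ DeltaL l ↔ ∃ y d, v = intVec y d ∧ IsRootCoords y d := by
  simp only [Set.mem_union, mem_DeltaS_iff, mem_DeltaM_iff, mem_DeltaL_iff, IsRootCoords,
    and_or_left, exists_or, or_assoc]

lemma Ihat_self_of_mem_DeltaS (hv : v ∈ DeltaS l) : Ihat v v = 1 := by
  obtain ⟨y, d, rfl, hy⟩ := mem_DeltaS_iff.mp hv
  simp [Ihat_intVec, hy]

lemma Ihat_self_of_mem_DeltaM (hv : v ∈ DeltaM l) : Ihat v v = 2 := by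
  obtain ⟨y, d, rfl, hy⟩ := mem_DeltaM_iff.mp hv
  simp [Ihat_intVec, hy]

lemma Ihat_self_of_mem_DeltaL (hv : v ∈ DeltaL l) : Ihat v v = 4 := by
  obtain ⟨y, d, rfl, hy, -⟩ := mem_DeltaL_iff.mp hv
  simp [Ihat_intVec, hy]

lemma disjoint_of_Ihat_self_ne {A B : Set (Fhat l)} {a b : ℝ}
    (hA : ∀ v ∈ A, Ihat v v = a) (hB : ∀ v ∈ B, Ihat v v = b) (hab : a ≠ b) : Disjoint A B :=
  Set.disjoint_left.mpr fun v hvA hvB => hab ((hA v hvA).symm.trans (hB v hvB))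

end Classes

/-- `Δ^{re} = Δ_s ⊔ Δ_m ⊔ Δ_l` (a disjoint union). -/
theorem stmt3 (l : ℕ) (hl : 1 ≤ l) :
    {v | IsRealRoot l v} = DeltaS l ∪ DeltaM l ∪ DeltaL l ∧
    Disjoint (DeltaS l) (DeltaM l) ∧ Disjoint (DeltaS l) (DeltaL l) ∧
    Disjoint (DeltaM l) (DeltaL l) := by
  obtain ⟨n, rfl⟩ := Nat.exists_eq_add_of_le' hl
  refine ⟨?_,
    disjoint_of_Ihat_self_ne (fun _ => Ihat_self_of_mem_DeltaS) (fun _ => Ihat_self_of_mem_DeltaM)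
      (by norm_num),
    disjoint_of_Ihat_self_ne (fun _ => Ihat_self_of_mem_DeltaS) (fun _ => Ihat_self_of_mem_DeltaL)
      (by norm_num),
    disjoint_of_Ihat_self_ne (fun _ => Ihat_self_of_mem_DeltaM) (fun _ => Ihat_self_of_mem_DeltaL)
      (by norm_num)⟩
  ext v
  exact isRealRoot_iff.trans mem_DeltaS_union_DeltaM_union_DeltaL_iff.symm
end
end

section
/- Let W be the subgroup of GL(F̂) generated by s_{α_0},…,s_{α_l}. (Type I) Let W_f^{(I)} be the subgroup generated by s_{α_1},…,s_{α_l} and M^{(I)} = ℤε_1 ⊕ ⋯ ⊕ ℤε_l ⊂ F. Then t(M^{(I)}) := {t_μ : μ ∈ M^{(I)}} is an abelian normal subgroup of W, and W is the internal semidirect product W = W_f^{(I)} ⋉ t(M^{(I)}): every w ∈ W can be written uniquely as w = u ∘ t_μ with u ∈ W_f^{(I)} and μ ∈ M^{(I)}. (Type II) Likewise, with W_f^{(II)} the subgroup generated by s_{α_0},…,s_{α_{l−1}} and M^{(II)} = ℤε_1^{(II)} ⊕ ⋯ ⊕ ℤε_l^{(II)} where ε_i^{(II)} = −ε_{l+1−i}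 + (1/2)δ, the set t(M^{(II)}) is an abelian normal subgroup of W and W = W_f^{(II)} ⋉ t(M^{(II)}). -/
open scoped BigOperators
open Finset

noncomputable section

/-- The affine Weyl group `W`, i.e. the set of all finite products of the simple
reflections `s_{α_0}, …, s_{α_l}` (these are involutions, so this set is the
subgroup they generate). -/
inductive InW (l : ℕ) : (Fhat l → Fhat l) → Prop
  | one : InW l id
  | step (i : ℕ) (hi : i ≤ l) (w : Fhat l → Fhat l) :
      InW l w → InW l (sref (simpleRoot l i) ∘ w)

/-- The finite Weyl group `W_f^{(I)}`, generated by `s_{α_1}, …, s_{α_l}`. -/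
inductive InWfI (l : ℕ) : (Fhat l → Fhat l) → Prop
  | one : InWfI l id
  | step (i : ℕ) (hi : 1 ≤ i) (hi' : i ≤ l) (w : Fhat l → Fhat l) :
      InWfI l w → InWfI l (sref (simpleRoot l i) ∘ w)

/-- The finite Weyl group `W_f^{(II)}`, generated by `s_{α_0}, …, s_{α_{l−1}}`. -/
inductive InWfII (l : ℕ) : (Fhat l → Fhat l) → Prop
  | one : InWfII l id
  | step (i : ℕ) (hi : i < l) (w : Fhat l → Fhat l) :
      InWfII l w → InWfII l (sref (simpleRoot l i) ∘ w)

/-- The lattice `M^{(I)} = ℤε_1 ⊕ ⋯ ⊕ ℤε_l ⊂ F`. -/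
def MI (l : ℕ) : Set (Fhat l) :=
  {μ | (∀ j, ∃ m : ℤ, μ.1 j = m) ∧ μ.2.1 = 0 ∧ μ.2.2 = 0}

/-- The lattice `M^{(II)} = ℤε_1^{(II)} ⊕ ⋯ ⊕ ℤε_l^{(II)}` where
`ε_i^{(II)} = −ε_{l+1−i} + δ/2`. -/
def MII (l : ℕ) : Set (Fhat l) :=
  {μ | (∀ j, ∃ m : ℤ, μ.1 j = m) ∧ μ.2.1 = -(∑ j, μ.1 j) / 2 ∧ μ.2.2 = 0}

/-!
Each simple reflection is an isometry of `Î` fixing `δ`, so every `w ∈ W` satisfies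
`w ∘ t_μ = t_{wμ} ∘ w`; moreover `W` preserves the lattice `ℤ^l ⊕ ℝδ`, and `t_μ` only depends
on `μ` modulo `δ`, which gives normality. The affine reflection `s_{δ-2ε_k}` equals
`t_{ε_k} ∘ s_{ε_k}`, which puts every `t_{ε_k}` in `W` and writes the one simple reflection
outside `W_f` (`s_{α_0}` in type I, `s_{α_l}` in type II) as an element of `W_f` composed with a
translation; pushing translations to the right then gives the decomposition `w = u ∘ t_μ`.
For uniqueness, `W_f^{(I)}` fixes `γ` and `W_f^{(II)}` fixes `ρ + γ` with `ρ = ½ ∑ ε_i`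
(these are orthogonal to the respective simple roots), while `t_μ` fixes such a point only
when `μ ∈ ℝδ`.
-/

section
variable {l : ℕ}

lemma Ihat_comm (u v : Fhat l) : Ihat u v = Ihat v u := by
  simp only [Ihat, mul_comm]; ring

@[simp] lemma Ihat_add_left (u v w : Fhat l) : Ihat (u + v) w = Ihat u w + Ihat v w := by
  simp only [Ihat, Prod.fst_add, Prod.snd_add, Pi.add_apply, add_mul, sum_add_distrib]; ring

@[simp] lemma Ihat_smul_left (a : ℝ) (u w : Fhat l) : Ihat (a • u) w = a * Ihat u w := by
  simp only [Ihat, Prod.smul_fst, Prod.smul_snd, Pi.smul_apply, smul_eq_mul, mul_assoc,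
    ← mul_sum]; ring

@[simp] lemma Ihat_neg_left (u w : Fhat l) : Ihat (-u) w = -Ihat u w := by
  simpa using Ihat_smul_left (-1) u w

@[simp] lemma Ihat_sub_left (u v w : Fhat l) : Ihat (u - v) w = Ihat u w - Ihat v w := by
  simp [sub_eq_add_neg]

@[simp] lemma Ihat_add_right (u v w : Fhat l) : Ihat u (v + w) = Ihat u v + Ihat u w := by
  simp [Ihat_comm u]

@[simp] lemma Ihat_smul_right (a : ℝ) (u w : Fhat l) : Ihat u (a • w) = a * Ihat u w := by
  simp [Ihat_comm u]

@[simp] lemma Ihat_sub_right (u v w : Fhat l) : Ihat u (v - w) = Ihat u v - Ihat u w := by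
  simp [Ihat_comm u]

@[simp] lemma Ihat_deltaV_right (u : Fhat l) : Ihat u (deltaV l) = u.2.2 := by
  simp [Ihat, deltaV]

@[simp] lemma Ihat_deltaV_left (u : Fhat l) : Ihat (deltaV l) u = u.2.2 := by
  rw [Ihat_comm, Ihat_deltaV_right]

lemma Ihat_eps_right {k : ℕ} (hk : 1 ≤ k) (hkl : k ≤ l) (u : Fhat l) :
    Ihat u (eps l k) = u.1 ⟨k - 1, by omega⟩ := by
  simp only [Ihat, eps, mul_ite, mul_one, mul_zero, add_zero]
  rw [sum_eq_single ⟨k - 1, by omega⟩ (fun j _ hj => if_neg (Fin.val_ne_of_ne hj)) (by simp),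
    if_pos rfl]

lemma Ihat_eps_eps {k m : ℕ} (hk : 1 ≤ k) (hm : 1 ≤ m) (hml : m ≤ l) :
    Ihat (eps l k) (eps l m) = if k = m then 1 else 0 := by
  rw [Ihat_eps_right hm hml]
  simp only [eps]
  congr 1
  simp only [eq_iff_iff]
  omega

@[simp] lemma eps_snd_snd (k : ℕ) : (eps l k).2.2 = 0 := rfl

@[simp] lemma deltaV_snd_snd : (deltaV l).2.2 = 0 := rfl

lemma sref_add (β u v : Fhat l) : sref β (u + v) = sref β u + sref β v := by
  simp only [sref, Ihat_add_left, mul_add, add_div, add_smul]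
  abel

lemma sref_smul (β : Fhat l) (a : ℝ) (u : Fhat l) : sref β (a • u) = a • sref β u := by
  simp only [sref, Ihat_smul_left, smul_sub, smul_smul]
  ring_nf

lemma sref_sub (β u v : Fhat l) : sref β (u - v) = sref β u - sref β v := by
  simp only [sref, Ihat_sub_left, mul_sub, sub_div, sub_smul]
  abel

lemma sref_eq_id_of_Ihat_self_eq_zero {β : Fhat l} (hβ : Ihat β β = 0) : sref β = id := by
  funext u; simp [sref, hβ]

lemma Ihat_sref_sref (β u v : Fhat l) : Ihat (sref β u) (sref β v) = Ihat u v := by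
  rcases eq_or_ne (Ihat β β) 0 with hβ | hβ
  · simp [sref_eq_id_of_Ihat_self_eq_zero hβ]
  simp only [sref, Ihat_sub_left, Ihat_sub_right, Ihat_smul_left, Ihat_smul_right,
    Ihat_comm v β]
  field_simp
  ring

lemma sref_involutive (β : Fhat l) : Function.Involutive (sref β) := by
  intro u
  rcases eq_or_ne (Ihat β β) 0 with hβ | hβ
  · simp [sref_eq_id_of_Ihat_self_eq_zero hβ]
  have hcoef : 2 * Ihat (sref β u) β / Ihat β β = -(2 * Ihat u β / Ihat β β) := by
    simp only [sref, Ihat_sub_left, Ihat_smul_left]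
    field_simp
    ring
  rw [sref, hcoef, neg_smul, sub_neg_eq_add, sref, sub_add_cancel]

lemma sref_apply_of_Ihat_eq_zero {β u : Fhat l} (h : Ihat u β = 0) : sref β u = u := by
  simp [sref, h]

lemma sref_deltaV {β : Fhat l} (hβ : β.2.2 = 0) : sref β (deltaV l) = deltaV l :=
  sref_apply_of_Ihat_eq_zero (by simp [hβ])

lemma sref_self {β : Fhat l} (hβ : Ihat β β ≠ 0) : sref β β = -β := by
  rw [sref, mul_div_assoc, div_self hβ, mul_one, two_smul]
  abel

lemma sref_smul_root {c : ℝ} (hc : c ≠ 0) (β : Fhat l) : sref (c • β) = sref β := by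
  funext u
  simp only [sref, Ihat_smul_left, Ihat_smul_right, smul_smul]
  congr 2
  rcases eq_or_ne (Ihat β β) 0 with hβ | hβ
  · simp [hβ]
  field_simp

lemma sref_sref_apply (β α : Fhat l) : sref (sref β α) = sref β ∘ sref α ∘ sref β := by
  funext u
  simp only [Function.comp_apply]
  conv_lhs => rw [← sref_involutive β u]
  rw [sref, Ihat_sref_sref, Ihat_sref_sref, ← sref_smul, ← sref_sub]
  rfl

lemma sref_sub_apply_right {a b : Fhat l} (hab : Ihat a a = Ihat b b)
    (hN : Ihat (a - b) (a - b) ≠ 0) : sref (a - b) b = a := by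
  have hcoef : 2 * Ihat b (a - b) / Ihat (a - b) (a - b) = -1 := by
    rw [div_eq_iff hN]
    simp only [Ihat_sub_left, Ihat_sub_right, Ihat_comm a b, hab]
    ring
  rw [sref, hcoef]
  module

lemma sref_sub_apply_left {a b : Fhat l} (hab : Ihat a a = Ihat b b)
    (hN : Ihat (a - b) (a - b) ≠ 0) : sref (a - b) a = b := by
  simpa [sref_sub_apply_right hab hN] using sref_involutive (a - b) b

lemma sref_comp_tmu {β : Fhat l} (hβ : β.2.2 = 0) (μ : Fhat l) :
    sref β ∘ tmu μ = tmu (sref β μ) ∘ sref β := by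
  funext u
  have hδ : Ihat (sref β u) (deltaV l) = Ihat u (deltaV l) := by
    rw [← Ihat_sref_sref β u, sref_deltaV hβ]
  simp only [Function.comp_apply, tmu, sref_sub, sref_add, sref_smul, sref_deltaV hβ, hδ,
    Ihat_sref_sref]

lemma tmu_comp_sref {β : Fhat l} (hβ : β.2.2 = 0) (μ : Fhat l) :
    tmu μ ∘ sref β = sref β ∘ tmu (sref β μ) := by
  rw [sref_comp_tmu hβ, sref_involutive]

lemma tmu_fst (μ u : Fhat l) : (tmu μ u).1 = u.1 + u.2.2 • μ.1 := by
  simp only [tmu, Ihat_deltaV_right, Prod.fst_sub, Prod.fst_add, Prod.smul_fst]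
  simp [deltaV]

@[simp] lemma tmu_zero : tmu (0 : Fhat l) = id := by
  funext u; simp [tmu, Ihat]

lemma tmu_comp_tmu {μ ν : Fhat l} (hμ : μ.2.2 = 0) (hν : ν.2.2 = 0) :
    tmu μ ∘ tmu ν = tmu (μ + ν) := by
  funext u
  simp only [Function.comp_apply, tmu, Ihat_add_left, Ihat_add_right, Ihat_sub_left,
    Ihat_smul_left, Ihat_deltaV_left, Ihat_deltaV_right, Prod.snd_add, Prod.snd_sub,
    Prod.smul_snd, deltaV_snd_snd, hμ, hν, Ihat_comm ν μ]
  module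

lemma tmu_eq_of_fst_eq {μ ν : Fhat l} (hμ : μ.2.2 = 0) (hν : ν.2.2 = 0) (h : μ.1 = ν.1) :
    tmu μ = tmu ν := by
  have hμν : μ = ν + (μ.2.1 - ν.2.1) • deltaV l := Prod.ext (by simp [h, deltaV])
    (Prod.ext (by simp [deltaV]) (by simp [hμ, hν]))
  funext u
  rw [hμν]
  simp only [tmu, Ihat_add_left, Ihat_add_right, Ihat_smul_left, Ihat_smul_right,
    Ihat_deltaV_left, Ihat_deltaV_right, Prod.snd_add, Prod.smul_snd, deltaV_snd_snd, hν]
  module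

lemma sref_add_deltaV {α : Fhat l} (hα : α.2.2 = 0) :
    sref (α + deltaV l) = tmu (-(2 / Ihat α α) • α) ∘ sref α := by
  have hN : Ihat (α + deltaV l) (α + deltaV l) = Ihat α α := by simp [hα]
  rcases eq_or_ne (Ihat α α) 0 with h0 | h0
  · rw [sref_eq_id_of_Ihat_self_eq_zero h0, sref_eq_id_of_Ihat_self_eq_zero (hN.trans h0)]
    simp [h0]
  funext u
  simp only [Function.comp_apply, sref, tmu, hN, Ihat_add_right, Ihat_sub_left,
    Ihat_smul_left, Ihat_smul_right, Ihat_deltaV_right, Prod.snd_sub, Prod.smul_snd, hα]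
  match_scalars <;> field_simp <;> ring

lemma Ihat_eps_self {k : ℕ} (hk : 1 ≤ k) (hkl : k ≤ l) : Ihat (eps l k) (eps l k) = 1 := by
  rw [Ihat_eps_eps hk hk hkl, if_pos rfl]

lemma sref_deltaV_sub_two_smul_eps {k : ℕ} (hk : 1 ≤ k) (hkl : k ≤ l) :
    sref (deltaV l - (2 : ℝ) • eps l k) = tmu (eps l k) ∘ sref (eps l k) := by
  have hα : Ihat (-(2 : ℝ) • eps l k) (-(2 : ℝ) • eps l k) = 4 := by
    simp only [Ihat_smul_left, Ihat_smul_right, Ihat_eps_self hk hkl]; norm_num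
  rw [sub_eq_neg_add, ← neg_smul, sref_add_deltaV (by simp), hα,
    sref_smul_root (by norm_num), smul_smul]
  norm_num

lemma simpleRoot_zero_s4 : simpleRoot l 0 = deltaV l - (2 : ℝ) • eps l 1 := if_pos rfl

lemma simpleRoot_of_lt {i : ℕ} (hi : 1 ≤ i) (hil : i < l) :
    simpleRoot l i = eps l i - eps l (i + 1) := by
  rw [simpleRoot, if_neg (by omega), if_neg (by omega)]

lemma simpleRoot_self (hl : 1 ≤ l) : simpleRoot l l = eps l l := by
  rw [simpleRoot, if_neg (by omega), if_pos rfl]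

lemma Ihat_eps_sub_eps_succ_self {k : ℕ} (hk : 1 ≤ k) (hkl : k < l) :
    Ihat (eps l k - eps l (k + 1)) (eps l k - eps l (k + 1)) = 2 := by
  have hk1 : 1 ≤ k + 1 := by omega
  simp only [Ihat_sub_left, Ihat_sub_right, Ihat_eps_eps hk hk hkl.le, Ihat_eps_eps hk hk1 hkl,
    Ihat_eps_eps hk1 hk hkl.le, Ihat_eps_eps hk1 hk1 hkl]
  norm_num

@[simp] lemma simpleRoot_snd_snd (i : ℕ) : (simpleRoot l i).2.2 = 0 := by
  unfold simpleRoot; split_ifs <;> simp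

/-- `ℤ^l ⊕ ℝδ`. Since `t_μ` only depends on `μ ∈ F` modulo `δ` (`tmu_eq_of_fst_eq`),
`M^{(I)}` and `M^{(II)}` are both sets of representatives of it. -/
def intLattice (l : ℕ) : AddSubgroup (Fhat l) where
  carrier := {μ | (∀ j, ∃ m : ℤ, μ.1 j = m) ∧ μ.2.2 = 0}
  add_mem' {μ ν} hμ hν := ⟨fun j => by
    obtain ⟨a, ha⟩ := hμ.1 j
    obtain ⟨b, hb⟩ := hν.1 j
    exact ⟨a + b, by simp [ha, hb]⟩, by simp [hμ.2, hν.2]⟩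
  zero_mem' := ⟨fun _ => ⟨0, by simp⟩, rfl⟩
  neg_mem' {μ} hμ := ⟨fun j => by
    obtain ⟨a, ha⟩ := hμ.1 j
    exact ⟨-a, by simp [ha]⟩, by simp [hμ.2]⟩

lemma eps_mem_intLattice (k : ℕ) : eps l k ∈ intLattice l :=
  ⟨fun j => ⟨if (j : ℕ) = k - 1 then 1 else 0, by simp [eps, apply_ite]⟩, rfl⟩

lemma deltaV_mem_intLattice : deltaV l ∈ intLattice l :=
  ⟨fun _ => ⟨0, by simp [deltaV]⟩, rfl⟩

lemma simpleRoot_mem_intLattice (i : ℕ) : simpleRoot l i ∈ intLattice l := by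
  have := eps_mem_intLattice (l := l)
  unfold simpleRoot
  split_ifs
  · exact sub_mem deltaV_mem_intLattice (by simpa [two_smul] using add_mem (this 1) (this 1))
  · exact this l
  · exact sub_mem (this i) (this (i + 1))

lemma MI_subset_intLattice : MI l ⊆ intLattice l := fun _ hμ => ⟨hμ.1, hμ.2.2⟩

lemma MII_subset_intLattice : MII l ⊆ intLattice l := fun _ hμ => ⟨hμ.1, hμ.2.2⟩

lemma exists_mem_MI_tmu_eq {μ : Fhat l} (hμ : μ ∈ intLattice l) :
    ∃ μ' ∈ MI l, tmu μ' = tmu μ :=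
  ⟨(μ.1, 0, 0), ⟨hμ.1, rfl, rfl⟩, tmu_eq_of_fst_eq rfl hμ.2 rfl⟩

lemma exists_mem_MII_tmu_eq {μ : Fhat l} (hμ : μ ∈ intLattice l) :
    ∃ μ' ∈ MII l, tmu μ' = tmu μ :=
  ⟨(μ.1, -(∑ j, μ.1 j) / 2, 0), ⟨hμ.1, rfl, rfl⟩, tmu_eq_of_fst_eq rfl hμ.2 rfl⟩

lemma sref_mem_intLattice {β μ : Fhat l} (hβ : β ∈ intLattice l) (hμ : μ ∈ intLattice l)
    (hc : ∃ m : ℤ, 2 * Ihat μ β / Ihat β β = m) : sref β μ ∈ intLattice l := by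
  obtain ⟨m, hm⟩ := hc
  rw [sref, hm, Int.cast_smul_eq_zsmul]
  exact sub_mem hμ (zsmul_mem hβ m)

lemma sref_simpleRoot_mem_intLattice (hl : 1 ≤ l) {i : ℕ} (hi : i ≤ l) {μ : Fhat l}
    (hμ : μ ∈ intLattice l) : sref (simpleRoot l i) μ ∈ intLattice l := by
  refine sref_mem_intLattice (simpleRoot_mem_intLattice i) hμ ?_
  obtain ⟨hμZ, hμ0⟩ := hμ
  rcases Nat.eq_zero_or_pos i with rfl | hi0
  · obtain ⟨m, hm⟩ := hμZ ⟨0, hl⟩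
    have hN : Ihat (simpleRoot l 0) (simpleRoot l 0) = 4 := by
      simp only [simpleRoot_zero_s4, Ihat_sub_left, Ihat_sub_right, Ihat_smul_left,
        Ihat_smul_right, Ihat_deltaV_left, Ihat_deltaV_right, Ihat_eps_self le_rfl hl]
      norm_num
    refine ⟨-m, ?_⟩
    rw [hN, simpleRoot_zero_s4, Ihat_sub_right, Ihat_smul_right, Ihat_deltaV_right,
      Ihat_eps_right le_rfl hl, hμ0, hm]
    push_cast; ring
  rcases hi.lt_or_eq with hil | rfl
  · have hi1 : 1 ≤ i + 1 := by omega
    obtain ⟨m, hm⟩ := hμZ ⟨i - 1, by omega⟩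
    obtain ⟨n, hn⟩ := hμZ ⟨i, hil⟩
    refine ⟨m - n, ?_⟩
    rw [simpleRoot_of_lt hi0 hil, Ihat_eps_sub_eps_succ_self hi0 hil, Ihat_sub_right,
      Ihat_eps_right hi0 hil.le, Ihat_eps_right hi1 hil, hm]
    simp only [Nat.add_sub_cancel, hn]
    push_cast; ring
  · obtain ⟨m, hm⟩ := hμZ ⟨i - 1, by omega⟩
    refine ⟨2 * m, ?_⟩
    rw [simpleRoot_self hl, Ihat_eps_self hl le_rfl, Ihat_eps_right hl le_rfl, hm]
    push_cast; ring

lemma InW.comp {w w' : Fhat l → Fhat l} (hw : InW l w) (hw' : InW l w') : InW l (w ∘ w') := by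
  induction hw with
  | one => exact hw'
  | step i hi w _ ih => exact .step i hi _ ih

lemma InW.injective {w : Fhat l → Fhat l} (hw : InW l w) : Function.Injective w := by
  induction hw with
  | one => exact Function.injective_id
  | step i _ w _ ih => exact (sref_involutive _).injective.comp ih

lemma InW.comp_tmu {w : Fhat l → Fhat l} (hw : InW l w) (μ : Fhat l) :
    w ∘ tmu μ = tmu (w μ) ∘ w := by
  induction hw generalizing μ with
  | one => rfl
  | step i _ w _ ih =>
    rw [Function.comp_assoc, ih, ← Function.comp_assoc, sref_comp_tmu (simpleRoot_snd_snd i)]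
    rfl

lemma InW.apply_mem_intLattice (hl : 1 ≤ l) {w : Fhat l → Fhat l} (hw : InW l w) {μ : Fhat l}
    (hμ : μ ∈ intLattice l) : w μ ∈ intLattice l := by
  induction hw with
  | one => exact hμ
  | step i hi w _ ih => exact sref_simpleRoot_mem_intLattice hl hi ih

lemma InW.exists_tmu_comp_eq (hl : 1 ≤ l) {w : Fhat l → Fhat l} (hw : InW l w) {ν : Fhat l}
    (hν : ν ∈ intLattice l) : ∃ ν' ∈ intLattice l, tmu ν ∘ w = w ∘ tmu ν' := by
  induction hw generalizing ν with
  | one => exact ⟨ν, hν, rfl⟩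
  | step i hi w _ ih =>
    obtain ⟨ν', hν', hw⟩ := ih (sref_simpleRoot_mem_intLattice hl hi hν)
    refine ⟨ν', hν', ?_⟩
    rw [← Function.comp_assoc, tmu_comp_sref (simpleRoot_snd_snd i), Function.comp_assoc, hw]
    rfl

lemma InWfI.comp {w w' : Fhat l → Fhat l} (hw : InWfI l w) (hw' : InWfI l w') :
    InWfI l (w ∘ w') := by
  induction hw with
  | one => exact hw'
  | step i hi hi' w _ ih => exact .step i hi hi' _ ih

lemma InWfI.inW {w : Fhat l → Fhat l} (hw : InWfI l w) : InW l w := by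
  induction hw with
  | one => exact .one
  | step i _ hi' w _ ih => exact .step i hi' _ ih

lemma InWfI.apply_gammaV {w : Fhat l → Fhat l} (hw : InWfI l w) : w (gammaV l) = gammaV l := by
  induction hw with
  | one => rfl
  | step i hi _ w _ ih =>
    refine (congrArg _ ih).trans (sref_apply_of_Ihat_eq_zero ?_)
    have : (simpleRoot l i).2.1 = 0 := by
      unfold simpleRoot; split_ifs <;> first | omega | simp [eps]
    simp [Ihat, gammaV, this]

lemma InWfI.sref_eps (hl : 1 ≤ l) {k : ℕ} (hk : 1 ≤ k) (hkl : k ≤ l) :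
    InWfI l (sref (eps l k)) := by
  induction hkl using Nat.decreasingInduction with
  | self => simpa [simpleRoot_self hl] using InWfI.step l hl le_rfl id .one
  | of_succ k hkl ih =>
    have hα : InWfI l (sref (simpleRoot l k)) := InWfI.step k hk (by omega) id .one
    have hswap : sref (simpleRoot l k) (eps l (k + 1)) = eps l k := by
      rw [simpleRoot_of_lt hk hkl]
      exact sref_sub_apply_right (by rw [Ihat_eps_self hk hkl.le, Ihat_eps_self (by omega) hkl])
        (by rw [Ihat_eps_sub_eps_succ_self hk hkl]; norm_num)
    rw [← hswap, sref_sref_apply]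
    exact (hα.comp (ih (by omega))).comp hα

lemma InWfII.comp {w w' : Fhat l → Fhat l} (hw : InWfII l w) (hw' : InWfII l w') :
    InWfII l (w ∘ w') := by
  induction hw with
  | one => exact hw'
  | step i hi w _ ih => exact .step i hi _ ih

lemma InWfII.inW {w : Fhat l → Fhat l} (hw : InWfII l w) : InW l w := by
  induction hw with
  | one => exact .one
  | step i hi w _ ih => exact .step i hi.le _ ih

def rhoV (l : ℕ) : Fhat l := (fun _ => 1 / 2, 0, 0)

lemma InWfII.apply_rhoV_add_gammaV (hl : 1 ≤ l) {w : Fhat l → Fhat l} (hw : InWfII l w) :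
    w (rhoV l + gammaV l) = rhoV l + gammaV l := by
  induction hw with
  | one => rfl
  | step i hi w _ ih =>
    refine (congrArg _ ih).trans (sref_apply_of_Ihat_eq_zero ?_)
    rcases Nat.eq_zero_or_pos i with rfl | hi0
    · rw [simpleRoot_zero_s4, Ihat_sub_right, Ihat_smul_right, Ihat_deltaV_right,
        Ihat_eps_right le_rfl hl]
      simp [rhoV, gammaV]
    · rw [simpleRoot_of_lt hi0 hi, Ihat_sub_right, Ihat_eps_right hi0 hi.le,
        Ihat_eps_right (by omega) hi]
      simp [rhoV, gammaV]

lemma InWfII.sref_deltaV_sub_two_smul_eps (hl : 1 ≤ l) {k : ℕ} (hk : 1 ≤ k) (hkl : k ≤ l) :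
    InWfII l (sref (deltaV l - (2 : ℝ) • eps l k)) := by
  induction k, hk using Nat.le_induction with
  | base => simpa [simpleRoot_zero_s4] using InWfII.step 0 hl id .one
  | succ k hk ih =>
    have hα : InWfII l (sref (simpleRoot l k)) := InWfII.step k (by omega) id .one
    have hswap : sref (simpleRoot l k) (deltaV l - (2 : ℝ) • eps l k)
        = deltaV l - (2 : ℝ) • eps l (k + 1) := by
      rw [simpleRoot_of_lt hk (by omega), sref_sub, sref_smul, sref_deltaV (by simp),
        sref_sub_apply_left (by rw [Ihat_eps_self hk (by omega), Ihat_eps_self (by omega) hkl])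
          (by rw [Ihat_eps_sub_eps_succ_self hk (by omega)]; norm_num)]
    rw [← hswap, sref_sref_apply]
    exact (hα.comp (ih (by omega))).comp hα

lemma InW.tmu_eps (hl : 1 ≤ l) {k : ℕ} (hk : 1 ≤ k) (hkl : k ≤ l) : InW l (tmu (eps l k)) := by
  have h := congrArg (· ∘ sref (eps l k)) (sref_deltaV_sub_two_smul_eps hk hkl)
  simp only [Function.comp_assoc, (sref_involutive _).comp_self, Function.comp_id] at h
  rw [← h]
  exact (InWfII.sref_deltaV_sub_two_smul_eps hl hk hkl).inW.comp (InWfI.sref_eps hl hk hkl).inW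

lemma InW.tmu_neg_eps (hl : 1 ≤ l) {k : ℕ} (hk : 1 ≤ k) (hkl : k ≤ l) :
    InW l (tmu (-eps l k)) := by
  have h := congrArg (· ∘ sref (eps l k)) (sref_comp_tmu (eps_snd_snd k) (eps l k))
  simp only [Function.comp_assoc, (sref_involutive _).comp_self, Function.comp_id,
    sref_self (by rw [Ihat_eps_self hk hkl]; norm_num)] at h
  rw [← h]
  have hs : InW l (sref (eps l k)) := (InWfI.sref_eps hl hk hkl).inW
  exact hs.comp ((InW.tmu_eps hl hk hkl).comp hs)

/-- Carrying `t_{-μ}` along makes this closed under negation without first showing that `W` is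
closed under inverses. -/
def translationLattice (l : ℕ) : AddSubgroup (Fhat l) where
  carrier := {μ | μ.2.2 = 0 ∧ InW l (tmu μ) ∧ InW l (tmu (-μ))}
  add_mem' {μ ν} hμ hν := by
    refine ⟨by simp [hμ.1, hν.1], ?_, ?_⟩
    · rw [← tmu_comp_tmu hμ.1 hν.1]
      exact hμ.2.1.comp hν.2.1
    · rw [neg_add, ← tmu_comp_tmu (by simp [hμ.1]) (by simp [hν.1])]
      exact hμ.2.2.comp hν.2.2
  zero_mem' := ⟨rfl, by simpa using InW.one, by simpa using InW.one⟩
  neg_mem' {μ} hμ := ⟨by simp [hμ.1], hμ.2.2, by rw [neg_neg]; exact hμ.2.1⟩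

lemma InW.tmu_of_mem_intLattice (hl : 1 ≤ l) {μ : Fhat l} (hμ : μ ∈ intLattice l) :
    InW l (tmu μ) := by
  choose m hm using hμ.1
  have hsum : ((μ.1, 0, 0) : Fhat l) = ∑ j : Fin l, m j • eps l (j + 1) := by
    refine Prod.ext (funext fun i => ?_) (Prod.ext ?_ ?_) <;>
      simp [Prod.fst_sum, Prod.snd_sum, eps, hm, Fin.val_inj]
  have hmem : ((μ.1, 0, 0) : Fhat l) ∈ translationLattice l := by
    rw [hsum]
    refine sum_mem fun j _ => zsmul_mem (show eps l (j + 1) ∈ translationLattice l from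
      ⟨rfl, InW.tmu_eps hl ?_ ?_, InW.tmu_neg_eps hl ?_ ?_⟩) _ <;> omega
  rw [← tmu_eq_of_fst_eq (μ := (μ.1, 0, 0)) rfl hμ.2 rfl]
  exact hmem.2.1

lemma InW.exists_eq_comp_tmu (hl : 1 ≤ l) {P : (Fhat l → Fhat l) → Prop} (hP_id : P id)
    (hP_comp : ∀ {u v}, P u → P v → P (u ∘ v)) (hPW : ∀ {u}, P u → InW l u)
    (hgen : ∀ i ≤ l, ∃ u ν, P u ∧ ν ∈ intLattice l ∧ sref (simpleRoot l i) = u ∘ tmu ν)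
    {w : Fhat l → Fhat l} (hw : InW l w) :
    ∃ u μ, P u ∧ μ ∈ intLattice l ∧ w = u ∘ tmu μ := by
  induction hw with
  | one => exact ⟨id, 0, hP_id, zero_mem _, by simp⟩
  | step i hi w _ ih =>
    obtain ⟨u, μ, hu, hμ, rfl⟩ := ih
    obtain ⟨u₀, ν, hu₀, hν, hs⟩ := hgen i hi
    obtain ⟨ν', hν', hpush⟩ := (hPW hu).exists_tmu_comp_eq hl hν
    refine ⟨u₀ ∘ u, ν' + μ, hP_comp hu₀ hu, add_mem hν' hμ, ?_⟩
    calc sref (simpleRoot l i) ∘ u ∘ tmu μ = u₀ ∘ (tmu ν ∘ u) ∘ tmu μ := by rw [hs]; rfl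
      _ = (u₀ ∘ u) ∘ tmu (ν' + μ) := by rw [hpush, ← tmu_comp_tmu hν'.2 hμ.2]; rfl

lemma eq_of_comp_tmu_eq {u₁ u₂ : Fhat l → Fhat l} {μ₁ μ₂ p : Fhat l}
    (hinj : Function.Injective u₂) (hp : p.2.2 = 1) (h₁ : u₁ p = p) (h₂ : u₂ p = p)
    (hμ₁ : μ₁.2.2 = 0) (hμ₂ : μ₂.2.2 = 0) (h : u₁ ∘ tmu μ₁ = u₂ ∘ tmu μ₂) :
    u₁ = u₂ ∧ μ₁.1 = μ₂.1 := by
  set ν := μ₂ + -μ₁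
  have hν : ν.2.2 = 0 := by simp [ν, hμ₁, hμ₂]
  have hu : u₁ = u₂ ∘ tmu ν := by
    have := congrArg (· ∘ tmu (-μ₁)) h
    simp only [Function.comp_assoc, tmu_comp_tmu hμ₁ (by simp [hμ₁] : (-μ₁).2.2 = 0),
      add_neg_cancel, tmu_zero, Function.comp_id] at this
    rw [this, tmu_comp_tmu hμ₂ (by simp [hμ₁])]
  have hfix : tmu ν p = p := hinj ((congrFun hu p).symm.trans (h₁.trans h₂.symm))
  have hν0 : ν.1 = 0 := by simpa [tmu_fst, hp] using congrArg Prod.fst hfix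
  refine ⟨by rw [hu, tmu_eq_of_fst_eq (ν := 0) hν rfl hν0, tmu_zero]; rfl, ?_⟩
  simpa [ν, add_neg_eq_zero, eq_comm] using hν0

lemma tmu_mem_comm_normal_of_subset_intLattice (hl : 1 ≤ l) {M : Set (Fhat l)}
    (hML : M ⊆ intLattice l) (hLM : ∀ μ ∈ intLattice l, ∃ μ' ∈ M, tmu μ' = tmu μ) :
    (∀ μ ∈ M, InW l (tmu μ)) ∧
    (∀ μ₁ ∈ M, ∀ μ₂ ∈ M, tmu μ₁ ∘ tmu μ₂ = tmu μ₂ ∘ tmu μ₁) ∧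
    (∀ w, InW l w → ∀ μ ∈ M, ∃ μ' ∈ M, w ∘ tmu μ = tmu μ' ∘ w) := by
  refine ⟨fun μ hμ => InW.tmu_of_mem_intLattice hl (hML hμ), fun μ₁ h₁ μ₂ h₂ => ?_,
    fun w hw μ hμ => ?_⟩
  · rw [tmu_comp_tmu (hML h₁).2 (hML h₂).2, tmu_comp_tmu (hML h₂).2 (hML h₁).2, add_comm]
  · obtain ⟨μ', hμ', heq⟩ := hLM _ (hw.apply_mem_intLattice hl (hML hμ))
    exact ⟨μ', hμ', by rw [heq, hw.comp_tmu]⟩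

lemma InW.existsUnique_comp_tmu (hl : 1 ≤ l) {M : Set (Fhat l)}
    (hML : M ⊆ intLattice l) (hLM : ∀ μ ∈ intLattice l, ∃ μ' ∈ M, tmu μ' = tmu μ)
    (hM : Set.InjOn Prod.fst M)
    {P : (Fhat l → Fhat l) → Prop} (hP_id : P id) (hP_comp : ∀ {u v}, P u → P v → P (u ∘ v))
    (hPW : ∀ {u}, P u → InW l u) {p : Fhat l} (hp : p.2.2 = 1) (hP_fix : ∀ {u}, P u → u p = p)
    (hgen : ∀ i ≤ l, ∃ u ν, P u ∧ ν ∈ intLattice l ∧ sref (simpleRoot l i) = u ∘ tmu ν)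
    {w : Fhat l → Fhat l} (hw : InW l w) :
    ∃! q : (Fhat l → Fhat l) × Fhat l, P q.1 ∧ q.2 ∈ M ∧ w = q.1 ∘ tmu q.2 := by
  obtain ⟨u, μ, hu, hμ, rfl⟩ := hw.exists_eq_comp_tmu hl hP_id hP_comp hPW hgen
  obtain ⟨μ', hμ', heq⟩ := hLM μ hμ
  refine ⟨(u, μ'), ⟨hu, hμ', by rw [heq]⟩, fun ⟨v, ν⟩ ⟨hv, hν, h⟩ => ?_⟩
  rw [← heq] at h
  obtain ⟨rfl, h1⟩ := eq_of_comp_tmu_eq (hPW hu).injective hp (hP_fix hv) (hP_fix hu)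
    (hML hν).2 (hML hμ').2 h.symm
  exact Prod.ext rfl (hM hν hμ' h1)

lemma exists_InWfI_comp_tmu_eq_sref (hl : 1 ≤ l) {i : ℕ} (hi : i ≤ l) :
    ∃ u ν, InWfI l u ∧ ν ∈ intLattice l ∧ sref (simpleRoot l i) = u ∘ tmu ν := by
  rcases Nat.eq_zero_or_pos i with rfl | hi0
  · refine ⟨sref (eps l 1), sref (eps l 1) (eps l 1), InWfI.sref_eps hl le_rfl hl,
      (InWfI.sref_eps hl le_rfl hl).inW.apply_mem_intLattice hl (eps_mem_intLattice 1), ?_⟩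
    rw [simpleRoot_zero_s4, sref_deltaV_sub_two_smul_eps le_rfl hl, tmu_comp_sref (eps_snd_snd 1)]
  · exact ⟨_, 0, InWfI.step i hi0 hi id .one, zero_mem _, by simp⟩

lemma exists_InWfII_comp_tmu_eq_sref (hl : 1 ≤ l) {i : ℕ} (hi : i ≤ l) :
    ∃ u ν, InWfII l u ∧ ν ∈ intLattice l ∧ sref (simpleRoot l i) = u ∘ tmu ν := by
  rcases hi.lt_or_eq with hil | hil
  · exact ⟨_, 0, InWfII.step i hil id .one, zero_mem _, by simp⟩
  have hu := InWfII.sref_deltaV_sub_two_smul_eps hl hl le_rfl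
  refine ⟨_, _, hu, hu.inW.apply_mem_intLattice hl (neg_mem (eps_mem_intLattice l)), ?_⟩
  rw [← tmu_comp_sref (by simp), sref_deltaV_sub_two_smul_eps hl le_rfl, ← Function.comp_assoc,
    tmu_comp_tmu (by simp) (by simp), neg_add_cancel, tmu_zero, hil, simpleRoot_self hl]
  rfl

lemma MI_injOn_fst : Set.InjOn Prod.fst (MI l) := fun _ h₁ _ h₂ h =>
  Prod.ext h (Prod.ext (h₁.2.1.trans h₂.2.1.symm) (h₁.2.2.trans h₂.2.2.symm))

lemma MII_injOn_fst : Set.InjOn Prod.fst (MII l) := fun _ h₁ _ h₂ h =>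
  Prod.ext h (Prod.ext (by rw [h₁.2.1, h₂.2.1, h]) (h₁.2.2.trans h₂.2.2.symm))

end

/-- semidirect product descriptions `W = W_f^{(♯)} ⋉ t(M^{(♯)})` for
`♯ ∈ {I, II}`: `t(M^{(♯)})` is an abelian normal subgroup of `W`, and every `w ∈ W`
is uniquely `u ∘ t_μ` with `u ∈ W_f^{(♯)}`, `μ ∈ M^{(♯)}`. -/
theorem stmt4 (l : ℕ) (hl : 1 ≤ l) :
    -- Type I
    ((∀ μ ∈ MI l, InW l (tmu μ)) ∧
     (∀ μ₁ ∈ MI l, ∀ μ₂ ∈ MI l, tmu μ₁ ∘ tmu μ₂ = tmu μ₂ ∘ tmu μ₁) ∧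
     (∀ w, InW l w → ∀ μ ∈ MI l, ∃ μ' ∈ MI l, w ∘ tmu μ = tmu μ' ∘ w) ∧
     (∀ w, InW l w → ∃! p : (Fhat l → Fhat l) × Fhat l,
        InWfI l p.1 ∧ p.2 ∈ MI l ∧ w = p.1 ∘ tmu p.2)) ∧
    -- Type II
    ((∀ μ ∈ MII l, InW l (tmu μ)) ∧
     (∀ μ₁ ∈ MII l, ∀ μ₂ ∈ MII l, tmu μ₁ ∘ tmu μ₂ = tmu μ₂ ∘ tmu μ₁) ∧
     (∀ w, InW l w → ∀ μ ∈ MII l, ∃ μ' ∈ MII l, w ∘ tmu μ = tmu μ' ∘ w) ∧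
     (∀ w, InW l w → ∃! p : (Fhat l → Fhat l) × Fhat l,
        InWfII l p.1 ∧ p.2 ∈ MII l ∧ w = p.1 ∘ tmu p.2)) := by
  obtain ⟨hI₁, hI₂, hI₃⟩ :=
    tmu_mem_comm_normal_of_subset_intLattice hl MI_subset_intLattice fun _ => exists_mem_MI_tmu_eq
  obtain ⟨hII₁, hII₂, hII₃⟩ :=
    tmu_mem_comm_normal_of_subset_intLattice hl MII_subset_intLattice fun _ => exists_mem_MII_tmu_eq
  refine ⟨⟨hI₁, hI₂, hI₃, fun w hw => ?_⟩, ⟨hII₁, hII₂, hII₃, fun w hw => ?_⟩⟩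
  · exact hw.existsUnique_comp_tmu hl MI_subset_intLattice (fun _ => exists_mem_MI_tmu_eq)
      MI_injOn_fst .one InWfI.comp InWfI.inW (p := gammaV l) rfl
      InWfI.apply_gammaV fun _ => exists_InWfI_comp_tmu_eq_sref hl
  · exact hw.existsUnique_comp_tmu hl MII_subset_intLattice (fun _ => exists_mem_MII_tmu_eq)
      MII_injOn_fst .one InWfII.comp InWfII.inW
      (p := rhoV l + gammaV l) (by simp [rhoV, gammaV]) (InWfII.apply_rhoV_add_gammaV hl)
      fun _ => exists_InWfII_comp_tmu_eq_sref hl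
end
end

section
/- Let ζ' : F̂ → F̂ be the linear map with ζ'(ε_i) = −ε_{l+1−i} for 1 ≤ i ≤ l, ζ'(δ) = δ, ζ'(γ) = γ, and set φ = t_h ∘ ζ' where h = (1/2)(ε_1 + ⋯ + ε_l). Then: (1) φ is an isometry of (F̂,Î) satisfying φ(ε_i) = ε_i^{(II)} for all 1 ≤ i ≤ l, φ(δ) = δ, and φ(Λ_0^{(I)}) = 2Λ_0^{(II)}; (2) φ is an involution, i.e., φ ∘ φ = id. -/
open scoped BigOperators
open Finset

noncomputable section

/-- `ε_n^{(II)} = −ε_{l+1−n} + (1/2)δ` (1-based index `n`). -/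
def epsII (l : ℕ) (n : ℕ) : Fhat l := -eps l (l + 1 - n) + (1/2 : ℝ) • deltaV l

/-- `Λ_0^{(I)} = 2γ`. -/
def Lam0I (l : ℕ) : Fhat l := (0, 0, 2)

/-- `Λ_0^{(II)} = γ + (1/2)(ε_1 + ⋯ + ε_l) − (l/8)δ`. -/
def Lam0II (l : ℕ) : Fhat l := (fun _ => 1/2, -(l : ℝ)/8, 1)

/-- The linear map `ζ'` with `ζ'(ε_i) = −ε_{l+1−i}`, `ζ'(δ) = δ`, `ζ'(γ) = γ`. -/
def zetaP (l : ℕ) (v : Fhat l) : Fhat l := (fun j => -v.1 j.rev, v.2.1, v.2.2)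

/-- `h = (1/2)(ε_1 + ⋯ + ε_l)`. -/
def hHalf (l : ℕ) : Fhat l := (fun _ => 1/2, 0, 0)

/-- `φ = t_h ∘ ζ'`. -/
def phiMap (l : ℕ) : Fhat l → Fhat l := tmu (hHalf l) ∘ zetaP l

lemma sum_rev {l : ℕ} (f : Fin l → ℝ) : ∑ i : Fin l, f i.rev = ∑ i, f i :=
  Fintype.sum_bijective Fin.rev Fin.rev_involutive.bijective
    (fun i : Fin l => f (Fin.rev i)) f fun _ => rfl

lemma phi_eq (l : ℕ) (v : Fhat l) :
    phiMap l v = (fun j => v.2.2/2 - v.1 j.rev,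
      v.2.1 + (1/2) * ∑ i, v.1 i - (l/8) * v.2.2, v.2.2) := by
  have h1 : ∑ i : Fin l, v.1 i.rev * (2⁻¹:ℝ) = 2⁻¹ * ∑ i, v.1 i := by
    rw [← Finset.sum_mul, sum_rev (fun i => v.1 i)]; ring
  have h2 : ∑ i : Fin l, (1/2 : ℝ) * (1/2) = l/4 := by
    simp [Finset.sum_const, Finset.card_univ]; ring
  ext j
  · simp [phiMap, tmu, zetaP, Ihat, deltaV, hHalf, h2, smul_eq_mul]; ring
  · simp [phiMap, tmu, zetaP, Ihat, deltaV, hHalf, h2, smul_eq_mul]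
    rw [h1]; ring
  · simp [phiMap, tmu, zetaP, Ihat, deltaV, hHalf, h2, smul_eq_mul]

/-- `φ = t_h ∘ ζ'` is an isometry of `(F̂, Î)` with
`φ(ε_i) = ε_i^{(II)}`, `φ(δ) = δ`, `φ(Λ_0^{(I)}) = 2Λ_0^{(II)}`, and `φ` is an
involution. -/
theorem stmt6 (l : ℕ) (hl : 1 ≤ l) :
    (∀ u v : Fhat l, Ihat (phiMap l u) (phiMap l v) = Ihat u v) ∧
    (∀ n : ℕ, 1 ≤ n → n ≤ l → phiMap l (eps l n) = epsII l n) ∧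
    phiMap l (deltaV l) = deltaV l ∧
    phiMap l (Lam0I l) = (2 : ℝ) • Lam0II l ∧
    phiMap l ∘ phiMap l = id := by
  refine ⟨?_, ?_, ?_, ?_, ?_⟩
  · intro u v
    rw [phi_eq, phi_eq]
    simp only [Ihat]
    have e1 : ∑ i : Fin l, (u.2.2/2 - u.1 i.rev) * (v.2.2/2 - v.1 i.rev)
        = ∑ i, (u.2.2/2 - u.1 i) * (v.2.2/2 - v.1 i) :=
      sum_rev (fun i => (u.2.2/2 - u.1 i) * (v.2.2/2 - v.1 i))
    have e2 : ∑ i : Fin l, (u.2.2/2 - u.1 i) * (v.2.2/2 - v.1 i)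
        = ∑ i : Fin l, (u.2.2/2*(v.2.2/2) - u.2.2/2*(v.1 i) - v.2.2/2*(u.1 i) + u.1 i*v.1 i) :=
      Finset.sum_congr rfl fun i _ => by ring
    rw [e1, e2]
    simp only [Finset.sum_add_distrib, Finset.sum_sub_distrib, ← Finset.mul_sum,
      Finset.sum_const, Finset.card_univ, Fintype.card_fin, nsmul_eq_mul]
    ring
  · intro n h1 h2
    rw [phi_eq]
    have hsum : ∑ i : Fin l, (if (i : ℕ) = n - 1 then (1:ℝ) else 0) = 1 := by
      have hc : ∀ i : Fin l, ((i:ℕ) = n - 1) = (i = ⟨n - 1, by omega⟩) := fun i => by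
        simp [Fin.ext_iff]
      simp [hc]
    ext j
    · have hiff : ((j.rev : ℕ) = n - 1) ↔ ((j : ℕ) = l + 1 - n - 1) := by
        have := j.isLt; simp only [Fin.rev]; omega
      simp only [eps, epsII, deltaV, Prod.fst_add, Prod.fst_neg, Prod.smul_fst,
        Pi.add_apply, Pi.neg_apply, Pi.smul_apply, smul_eq_mul, hiff]
      split <;> simp
    · simp [eps, epsII, deltaV, hsum, smul_eq_mul]
    · simp [eps, epsII, deltaV]
  · rw [phi_eq]; ext j <;> simp [deltaV]
  · rw [phi_eq]; ext j <;> simp [Lam0I, Lam0II, smul_eq_mul] <;> ring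
  · funext v
    rw [Function.comp_apply, phi_eq, phi_eq]
    ext j
    · simp [Fin.rev_rev]
    · simp only [id_eq]
      have : ∑ i : Fin l, (v.2.2/2 - v.1 i.rev) = l * (v.2.2/2) - ∑ i, v.1 i := by
        rw [Finset.sum_sub_distrib, sum_rev (fun i => v.1 i), Finset.sum_const,
          Finset.card_univ, Fintype.card_fin, nsmul_eq_mul]
      rw [this]; push_cast; ring
    · rfl
end
end
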